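/- In the multi-player reach-avoid setup, fix any opponent local policies π_{−i}. Then there exists a deterministic local policy π_i* for player i (i.e., π_i*(s,t) is a point mass on a single action for every (s,t) ∈ S × {0,…,T−1}) such that F(π_i*, π_{−i}) ≥ F(π_i, π_{−i}) for every (possibly stochastic) local policy π_i of player i. In particular, the supremum of F(·, π_{−i}) over all local policies of player i is attained, and it is attained at a deterministic policy. -/
import Mathlib


open Finset

/-- Target-membership indicator `X_i`. -/
def Xind {S : Type} [DecidableEq S] (Targ : Finset S) (s : S) : ℝ :=
  if s ∈ Targ then 1 else 0

/-- Pairwise avoidance indicator `Y_{ij}`. -/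
def Yind {N : ℕ} {S : Type} [DecidableEq S] (i j : Fin N) (si sj : S) : ℝ :=
  if i = j ∨ si ≠ sj then 1 else 0

/-- Kernel induced by a local policy: `y_i^{π_i}(s,s',t) = ∑_a P_i(s'|s,a) π_i(s,t)(a)`. -/
noncomputable def ker {N : ℕ} {S : Type} {A : Fin N → Type} [∀ i, Fintype (A i)]
    (P : ∀ i, S → A i → S → ℝ) (pol : ∀ i, S → ℕ → A i → ℝ)
    (i : Fin N) (s s' : S) (t : ℕ) : ℝ :=
  ∑ a : A i, P i s a s' * pol i s t a

/-- Reach-avoid indicator of a joint trajectory `τ`, horizon `T`. -/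
noncomputable def RA {S : Type} [DecidableEq S] (N T : ℕ)
    (Targ : Fin N → Finset S) (τ : Fin N → Fin (T + 1) → S) : ℝ :=
  (∏ i, Xind (Targ i) (τ i (Fin.last T))) *
    ∏ t : Fin (T + 1), ∏ i, ∏ j, Yind i j (τ i t) (τ j t)

/-- Multi-player reach-avoid objective `F(π_1,…,π_N)`. -/
noncomputable def Fobj (N T : ℕ) {S : Type} [Fintype S] [DecidableEq S]
    {A : Fin N → Type} [∀ i, Fintype (A i)]
    (Targ : Fin N → Finset S) (p : Fin N → S → ℝ)
    (P : ∀ i, S → A i → S → ℝ) (pol : ∀ i, S → ℕ → A i → ℝ) : ℝ :=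
  ∑ τ : Fin N → Fin (T + 1) → S,
    RA N T Targ τ *
      ∏ i, (p i (τ i 0) * ∏ t : Fin T, ker P pol i (τ i t.castSucc) (τ i t.succ) (t : ℕ))

/-- Deterministic local policy built from a table `d : S × Fin T → A`. -/
noncomputable def detPol {S A : Type} [DecidableEq A] (T : ℕ) (a₀ : A)
    (d : S × Fin T → A) (s : S) (t : ℕ) (a : A) : ℝ :=
  if h : t < T then (if a = d (s, ⟨t, h⟩) then 1 else 0)
  else (if a = a₀ then 1 else 0)

/-- **Existence of a deterministic best response.** Fix any opponent local
policies `π_{-i}` (the components `pol j`, `j ≠ i`). There exists a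
deterministic local policy `polStar` for player `i` (a point mass on a single
action at every `(s,t)`) whose objective value is at least that of every
(possibly stochastic) local policy of player `i`; in particular the supremum
of `F(·, π_{-i})` over player `i`'s local policies is attained at a
deterministic policy. -/
theorem exists_deterministic_best_response (N T : ℕ) {S : Type}
    [Fintype S] [DecidableEq S] [Nonempty S]
    {A : Fin N → Type} [∀ i, Fintype (A i)] [∀ i, DecidableEq (A i)]
    [∀ i, Nonempty (A i)]
    (Targ : Fin N → Finset S)
    (p : Fin N → S → ℝ) (hp0 : ∀ i s, 0 ≤ p i s) (hp1 : ∀ i, ∑ s, p i s = 1)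
    (P : ∀ i, S → A i → S → ℝ)
    (hP0 : ∀ i s a s', 0 ≤ P i s a s') (hP1 : ∀ i s a, ∑ s', P i s a s' = 1)
    (i : Fin N) (pol : ∀ j, S → ℕ → A j → ℝ)
    (hpol0 : ∀ j, j ≠ i → ∀ s t a, 0 ≤ pol j s t a)
    (hpol1 : ∀ j, j ≠ i → ∀ s t, t < T → ∑ a, pol j s t a = 1) :
    ∃ polStar : S → ℕ → A i → ℝ,
      (∀ s t, ∃ a : A i, ∀ a', polStar s t a' = if a' = a then 1 else 0) ∧
      ∀ poli : S → ℕ → A i → ℝ, (∀ s t a, 0 ≤ poli s t a) →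
        (∀ s t, t < T → ∑ a, poli s t a = 1) →
        Fobj N T Targ p P (Function.update pol i poli) ≤
          Fobj N T Targ p P (Function.update pol i polStar) := by
  classical
  obtain ⟨a₀⟩ : Nonempty (A i) := inferInstance
  -- kernel of an updated family, at player i
  have hker : ∀ (q : S → ℕ → A i → ℝ) (s s' : S) (t : ℕ),
      ker P (Function.update pol i q) i s s' t = ∑ a, P i s a s' * q s t a := by
    intro q s s' t
    simp [ker, Function.update_self]
  -- kernel of a deterministic table policy
  have hkerd : ∀ (d : S × Fin T → A i) (s s' : S) (t : Fin T),
      ker P (Function.update pol i (detPol T a₀ d)) i s s' (t : ℕ)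
        = P i s (d (s, t)) s' := by
    intro d s s' t
    rw [hker]
    have h2 : ∀ a : A i, P i s a s' * detPol T a₀ d s (t : ℕ) a
        = if a = d (s, t) then P i s a s' else 0 := by
      intro a
      simp only [detPol, dif_pos t.isLt, Fin.eta, mul_ite, mul_one, mul_zero]
    rw [Finset.sum_congr rfl fun a _ => h2 a,
      Finset.sum_ite_eq' univ (d (s, t)) (fun a => P i s a s')]
    simp
  -- choose the best deterministic table
  obtain ⟨dstar, hdstar⟩ := Finite.exists_max
    (fun d : S × Fin T → A i => Fobj N T Targ p P (Function.update pol i (detPol T a₀ d)))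
  refine ⟨detPol T a₀ dstar, ?_, ?_⟩
  · intro s t
    by_cases h : t < T
    · exact ⟨dstar (s, ⟨t, h⟩), fun a' => by simp only [detPol, dif_pos h]⟩
    · exact ⟨a₀, fun a' => by simp only [detPol, dif_neg h]⟩
  · intro poli hpoli0 hpoli1
    -- the weights of the convex combination
    set w : (S × Fin T → A i) → ℝ := fun d => ∏ x : S × Fin T, poli x.1 x.2 (d x) with hw
    have hw0 : ∀ d, 0 ≤ w d := fun d => Finset.prod_nonneg fun x _ => hpoli0 _ _ _
    have hwsum : ∑ d : S × Fin T → A i, w d = 1 := by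
      have h1 : (∏ x : S × Fin T, ∑ a, poli x.1 x.2 a)
          = ∑ d ∈ Fintype.piFinset (fun _ : S × Fin T => (univ : Finset (A i))),
              ∏ x : S × Fin T, poli x.1 x.2 (d x) :=
        Finset.prod_univ_sum _ _
      rw [Fintype.piFinset_univ] at h1
      simp only [hw]
      rw [← h1]
      exact Finset.prod_eq_one fun x _ => hpoli1 x.1 x.2 x.2.isLt
    -- key per-trajectory multilinear expansion
    have key : ∀ τ : Fin N → Fin (T + 1) → S,
        (∏ t : Fin T, ker P (Function.update pol i poli) i (τ i t.castSucc) (τ i t.succ) (t : ℕ))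
          = ∑ d : S × Fin T → A i, w d *
              ∏ t : Fin T,
                ker P (Function.update pol i (detPol T a₀ d)) i (τ i t.castSucc) (τ i t.succ) (t : ℕ) := by
      intro τ
      have step1 : (∏ x : S × Fin T,
            ∑ a, poli x.1 x.2 a * (if x.1 = τ i x.2.castSucc then P i x.1 a (τ i x.2.succ) else 1))
          = ∏ t : Fin T, ker P (Function.update pol i poli) i (τ i t.castSucc) (τ i t.succ) (t : ℕ) := by
        rw [Fintype.prod_prod_type, Finset.prod_comm]
        refine Finset.prod_congr rfl fun t _ => ?_
        rw [hker]
        rw [Finset.prod_eq_single (τ i t.castSucc)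
          (fun s _ hs => by
            rw [Finset.sum_congr rfl fun a _ => by rw [if_neg hs, mul_one]]
            exact hpoli1 s (t : ℕ) t.isLt)
          (fun hmem => absurd (Finset.mem_univ _) hmem)]
        refine Finset.sum_congr rfl fun a _ => ?_
        rw [if_pos rfl, mul_comm]
      have step2 : (∏ x : S × Fin T,
            ∑ a, poli x.1 x.2 a * (if x.1 = τ i x.2.castSucc then P i x.1 a (τ i x.2.succ) else 1))
          = ∑ d : S × Fin T → A i, ∏ x : S × Fin T,
              poli x.1 x.2 (d x) * (if x.1 = τ i x.2.castSucc then P i x.1 (d x) (τ i x.2.succ) else 1) := by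
        have := Finset.prod_univ_sum (fun _ : S × Fin T => (univ : Finset (A i)))
          (fun x a => poli x.1 x.2 a * (if x.1 = τ i x.2.castSucc then P i x.1 a (τ i x.2.succ) else 1))
        rw [Fintype.piFinset_univ] at this
        exact this
      have step3 : ∀ d : S × Fin T → A i,
          (∏ x : S × Fin T,
              poli x.1 x.2 (d x) * (if x.1 = τ i x.2.castSucc then P i x.1 (d x) (τ i x.2.succ) else 1))
            = w d * ∏ t : Fin T, P i (τ i t.castSucc) (d (τ i t.castSucc, t)) (τ i t.succ) := by
        intro d
        rw [Finset.prod_mul_distrib]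
        refine congrArg (w d * ·) ?_
        rw [Fintype.prod_prod_type, Finset.prod_comm]
        refine Finset.prod_congr rfl fun t _ => ?_
        rw [Finset.prod_ite_eq' univ (τ i t.castSucc) (fun s => P i s (d (s, t)) (τ i t.succ))]
        simp
      rw [← step1, step2]
      refine Finset.sum_congr rfl fun d _ => ?_
      rw [step3 d]
      refine congrArg (w d * ·) (Finset.prod_congr rfl fun t _ => ?_)
      exact (hkerd d (τ i t.castSucc) (τ i t.succ) t).symm
    -- split off player `i`'s factor; opponents' factors do not depend on `q`
    have hC : ∀ (q : S → ℕ → A i → ℝ) (τ : Fin N → Fin (T + 1) → S),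
        (∏ j, (p j (τ j 0) *
            ∏ t : Fin T, ker P (Function.update pol i q) j (τ j t.castSucc) (τ j t.succ) (t : ℕ)))
          = (p i (τ i 0) *
              ∏ t : Fin T, ker P (Function.update pol i q) i (τ i t.castSucc) (τ i t.succ) (t : ℕ)) *
            ∏ j ∈ univ.erase i, (p j (τ j 0) *
              ∏ t : Fin T, ker P pol j (τ j t.castSucc) (τ j t.succ) (t : ℕ)) := by
      intro q τ
      rw [← Finset.mul_prod_erase univ _ (mem_univ i)]
      refine congrArg _ (Finset.prod_congr rfl fun j hj => ?_)
      have hji : j ≠ i := (Finset.mem_erase.mp hj).1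
      refine congrArg _ (Finset.prod_congr rfl fun t _ => ?_)
      unfold ker
      rw [Function.update_of_ne hji]
    -- the value of `poli` is a convex combination of deterministic values
    have main : Fobj N T Targ p P (Function.update pol i poli)
        = ∑ d : S × Fin T → A i,
            w d * Fobj N T Targ p P (Function.update pol i (detPol T a₀ d)) := by
      unfold Fobj
      have hτ : ∀ τ : Fin N → Fin (T + 1) → S,
          RA N T Targ τ * ∏ j, (p j (τ j 0) *
              ∏ t : Fin T, ker P (Function.update pol i poli) j (τ j t.castSucc) (τ j t.succ) (t : ℕ))
            = ∑ d : S × Fin T → A i, w d * (RA N T Targ τ * ∏ j, (p j (τ j 0) *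
                ∏ t : Fin T, ker P (Function.update pol i (detPol T a₀ d)) j (τ j t.castSucc) (τ j t.succ) (t : ℕ))) := by
        intro τ
        rw [hC poli τ, key τ]
        rw [Finset.sum_congr rfl fun d (_ : d ∈ (univ : Finset (S × Fin T → A i))) =>
          congrArg (fun x => w d * (RA N T Targ τ * x)) (hC (detPol T a₀ d) τ)]
        rw [Finset.mul_sum, Finset.sum_mul, Finset.mul_sum]
        exact Finset.sum_congr rfl fun d _ => by ring
      rw [Finset.sum_congr rfl fun τ _ => hτ τ, Finset.sum_comm]
      exact Finset.sum_congr rfl fun d _ => (Finset.mul_sum _ _ _).symm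
    calc Fobj N T Targ p P (Function.update pol i poli)
        = ∑ d : S × Fin T → A i,
            w d * Fobj N T Targ p P (Function.update pol i (detPol T a₀ d)) := main
      _ ≤ ∑ d : S × Fin T → A i,
            w d * Fobj N T Targ p P (Function.update pol i (detPol T a₀ dstar)) :=
          Finset.sum_le_sum fun d _ => mul_le_mul_of_nonneg_left (hdstar d) (hw0 d)
      _ = Fobj N T Targ p P (Function.update pol i (detPol T a₀ dstar)) := by
          rw [← Finset.sum_mul, hwsum, one_mul]
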